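/- For any partition λ, the misère Grundy value of λ under RIT equals the misère Grundy value of the Nim position rem(λ). -/

import Mathlib

/-! A RIT move changes exactly one part, hence exactly one coordinate of `rem λ`; one of the
two Nim positions is then an option of the other, so their misère Nim values differ.
Conversely, every Nim move on `rem λ` is realised by lowering an odd-numbered row. When
`rem λ = 0` but `λ ≠ []`, the number of rows is even, and lowering the last row by one reaches
a position whose remnant is a single heap of size `1`, of misère value `0`. So `λ ↦ G⁻(rem λ)` satisfies
the mex recursion of RIT, and induction on `|λ|` gives the claim. -/

/-- The `j`-th part (0-indexed) of a partition given as a list, `0` beyond the end. -/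
def part (l : List ℕ) (j : ℕ) : ℕ := l.getD j 0

/-- A partition: a nonincreasing list of positive integers. -/
def IsPartition (l : List ℕ) : Prop :=
  l.Chain' (· ≥ ·) ∧ ∀ x ∈ l, 0 < x

/-- RIT move: replace the part at (0-indexed) position `i` by a smaller value `v`,
keeping the sequence nonincreasing, then drop the (trailing) zeros. -/
def RitMove (l l' : List ℕ) : Prop :=
  ∃ i v, i < l.length ∧ v < part l i ∧ (l.set i v).Chain' (· ≥ ·) ∧
    l' = (l.set i v).filter (fun x => x ≠ 0)

/-- RIT move on an odd-numbered row (1-indexed), i.e. an even 0-indexed position. -/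
def RitMoveOdd (l l' : List ℕ) : Prop :=
  ∃ i v, i < l.length ∧ i % 2 = 0 ∧ v < part l i ∧ (l.set i v).Chain' (· ≥ ·) ∧
    l' = (l.set i v).filter (fun x => x ≠ 0)

/-- RIT move on an even-numbered row (1-indexed), i.e. an odd 0-indexed position. -/
def RitMoveEven (l l' : List ℕ) : Prop :=
  ∃ i v, i < l.length ∧ i % 2 = 1 ∧ v < part l i ∧ (l.set i v).Chain' (· ≥ ·) ∧
    l' = (l.set i v).filter (fun x => x ≠ 0)

/-- `core λ = (λ₂, λ₂, λ₄, λ₄, …)` (1-indexed parts), as a `0`-padded sequence. -/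
def core (l : List ℕ) : ℕ → ℕ := fun j => part l (2 * (j / 2) + 1)

/-- `rem λ = (λ₁ - λ₂, λ₃ - λ₄, …)` (1-indexed parts), as a `0`-padded sequence. -/
def rem (l : List ℕ) : ℕ → ℕ := fun i => part l (2 * i) - part l (2 * i + 1)

/-- A Nim move strictly decreases exactly one coordinate. -/
def NimMove (p q : ℕ → ℕ) : Prop := ∃ i, q i < p i ∧ ∀ j, j ≠ i → q j = p j

/-- The nim-sum (bitwise XOR) of the remnant of `l`:
`(λ₁ - λ₂) ⊕ (λ₃ - λ₄) ⊕ ⋯ ⊕ (λ_{2⌈r/2⌉-1} - λ_{2⌈r/2⌉})`. -/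
def nimSum (l : List ℕ) : ℕ :=
  (List.ofFn (fun i : Fin ((l.length + 1) / 2) => rem l i)).foldr (· ^^^ ·) 0

/-- The minimal excludant of a set of naturals. -/
noncomputable def mexOf (S : Set ℕ) : ℕ := sInf {n | n ∉ S}

/-- `G` is the (normal play) Sprague-Grundy function of RIT. -/
def IsRitGrundy (G : List ℕ → ℕ) : Prop :=
  ∀ l, IsPartition l → G l = mexOf {n | ∃ l', RitMove l l' ∧ G l' = n}

/-- `G` is the misère Grundy function of RIT (value `1` at the terminal position). -/
def IsRitMisereGrundy (G : List ℕ → ℕ) : Prop :=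
  G [] = 1 ∧ ∀ l, IsPartition l → l ≠ [] →
    G l = mexOf {n | ∃ l', RitMove l l' ∧ G l' = n}

/-- `G` is the misère Grundy function of Nim on `0`-padded sequences of heaps. -/
def IsNimMisereGrundy (G : (ℕ → ℕ) → ℕ) : Prop :=
  (∀ p : ℕ → ℕ, (∀ i, p i = 0) → G p = 1) ∧
  (∀ p : ℕ → ℕ, (Function.support p).Finite → (∃ i, p i ≠ 0) →
    G p = mexOf {n | ∃ q, NimMove p q ∧ G q = n})

/-- `P` is the set of P-positions of RIT under normal play. -/
def IsRitP (P : List ℕ → Prop) : Prop :=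
  ∀ l, IsPartition l → (P l ↔ ∀ l', RitMove l l' → ¬ P l')

theorem mexOf_notMem {S : Set ℕ} (hS : S.Finite) : mexOf S ∉ S :=
  Nat.sInf_mem hS.exists_notMem

theorem mem_of_lt_mexOf {S : Set ℕ} {m : ℕ} (hm : m < mexOf S) : m ∈ S := by
  simpa using Nat.notMem_of_lt_sInf hm

theorem mexOf_eq {S : Set ℕ} {g : ℕ} (hg : g ∉ S) (hlt : ∀ m < g, m ∈ S) : mexOf S = g :=
  le_antisymm (Nat.sInf_le hg) (le_csInf ⟨g, hg⟩ fun _ hn => not_lt.1 fun h => hn (hlt _ h))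

section Nim

variable {Gn : (ℕ → ℕ) → ℕ} {p q : ℕ → ℕ}

theorem finite_setOf_nimMove (hp : p.support.Finite) : {q | NimMove p q}.Finite := by
  refine (hp.biUnion fun i _ => (Set.finite_Iio (p i)).image (Function.update p i)).subset ?_
  rintro q ⟨i, hi, hq⟩
  refine Set.mem_biUnion (x := i) (by simp only [Function.mem_support]; omega) ⟨q i, hi, ?_⟩
  funext j
  rcases eq_or_ne j i with rfl | hj
  · simp
  · simp [hj, hq j hj]

theorem IsNimMisereGrundy.ne_of_nimMove (hGn : IsNimMisereGrundy Gn) (hp : p.support.Finite)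
    (h : NimMove p q) : Gn q ≠ Gn p := by
  have ⟨i, hi, _⟩ := h
  rw [hGn.2 p hp ⟨i, by omega⟩]
  intro he
  exact mexOf_notMem ((finite_setOf_nimMove hp).image Gn) (he ▸ ⟨q, h, rfl⟩)

theorem IsNimMisereGrundy.ne_of_eq_update (hGn : IsNimMisereGrundy Gn) (hp : p.support.Finite)
    (hq : q.support.Finite) {i : ℕ} (hi : q i ≠ p i) (hpq : ∀ j, j ≠ i → q j = p j) :
    Gn q ≠ Gn p := by
  rcases lt_or_gt_of_ne hi with hlt | hlt
  · exact hGn.ne_of_nimMove hp ⟨i, hlt, hpq⟩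
  · exact (hGn.ne_of_nimMove hq ⟨i, hlt, fun j hj => (hpq j hj).symm⟩).symm

theorem IsNimMisereGrundy.exists_nimMove_of_lt (hGn : IsNimMisereGrundy Gn)
    (hp : p.support.Finite) (hp0 : p ≠ 0) {m : ℕ} (hm : m < Gn p) :
    ∃ q, NimMove p q ∧ Gn q = m := by
  rw [hGn.2 p hp (by simpa [funext_iff] using hp0)] at hm
  exact mem_of_lt_mexOf hm

theorem IsNimMisereGrundy.apply_single_one (hGn : IsNimMisereGrundy Gn) (k : ℕ) :
    Gn (Pi.single k 1) = 0 := by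
  rw [hGn.2 _ ((Set.finite_singleton k).subset Pi.support_single_subset) ⟨k, by simp⟩]
  refine mexOf_eq ?_ fun m hm => absurd hm (Nat.not_lt_zero m)
  rintro ⟨q, ⟨i, hi, hq⟩, hq0⟩
  have hik : i = k := by
    by_contra h
    simp [h] at hi
  subst hik
  have : ∀ j, q j = 0 := by
    intro j
    rcases eq_or_ne j i with rfl | hj
    · simpa using hi
    · simp [hq j hj, hj]
  simp [hGn.1 q this] at hq0

end Nim

section Partition

variable {l l' : List ℕ}

theorem part_eq_getElem {j : ℕ} (hj : j < l.length) : part l j = l[j] :=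
  List.getD_eq_getElem l 0 hj

theorem part_eq_zero {j : ℕ} (hj : l.length ≤ j) : part l j = 0 := by
  simp [part, hj]

theorem part_set {i : ℕ} (hi : i < l.length) (v : ℕ) :
    part (l.set i v) = Function.update (part l) i v := by
  funext j
  rcases eq_or_ne j i with rfl | hj
  · simp [part, hi]
  · simp [part, hj, Ne.symm hj]

theorem isChain_ge_iff_antitone_part : l.IsChain (· ≥ ·) ↔ Antitone (part l) := by
  rw [List.isChain_iff_getElem]
  refine ⟨fun h => antitone_nat_of_succ_le fun n => ?_, fun h n hn => ?_⟩
  · by_cases hn : n + 1 < l.length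
    · rw [part_eq_getElem hn, part_eq_getElem (by omega)]
      exact h n hn
    · rw [part_eq_zero (by omega)]
      exact Nat.zero_le _
  · simpa [part_eq_getElem hn, part_eq_getElem (Nat.lt_of_succ_lt hn)] using h n.le_succ

theorem part_filter_ne_zero (hl : l.IsChain (· ≥ ·)) : part (l.filter (· ≠ 0)) = part l := by
  induction l with
  | nil => rfl
  | cons a t ih =>
    by_cases ha : a = 0
    · subst ha
      have ht : ∀ x ∈ t, x = 0 := fun x hx =>
        Nat.le_zero.1 ((List.pairwise_cons.1 (List.isChain_iff_pairwise.1 hl)).1 x hx)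
      rw [List.filter_cons_of_neg (by simp), List.filter_eq_nil_iff.2 (by simpa using ht)]
      funext j
      exact (Nat.le_zero.1 (isChain_ge_iff_antitone_part.1 hl (Nat.zero_le j))).symm
    · rw [List.filter_cons_of_pos (by simpa using ha)]
      funext j
      cases j with
      | zero => rfl
      | succ j => exact congrFun (ih hl.tail) j

theorem sum_set_lt {i v : ℕ} (hv : v < part l i) : (l.set i v).sum < l.sum := by
  induction l generalizing i with
  | nil => simp [part] at hv
  | cons a t ih =>
    cases i with
    | zero => simpa [part] using hv
    | succ i => simpa using ih (i := i) hv

theorem RitMove.isPartition (h : RitMove l l') : IsPartition l' := by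
  obtain ⟨i, v, -, -, hchain, rfl⟩ := h
  exact ⟨hchain.sublist List.filter_sublist, fun x hx => by
    simpa [Nat.pos_iff_ne_zero] using (List.mem_filter.1 hx).2⟩

theorem RitMove.sum_lt (h : RitMove l l') : l'.sum < l.sum := by
  obtain ⟨i, v, -, hv, -, rfl⟩ := h
  exact (List.filter_sublist.sum_le_sum fun _ _ => Nat.zero_le _).trans_lt (sum_set_lt hv)

theorem RitMove.exists_part_eq_update (h : RitMove l l') :
    ∃ i v, part l (i + 1) ≤ v ∧ v < part l i ∧ part l' = Function.update (part l) i v := by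
  obtain ⟨i, v, hi, hv, hchain, rfl⟩ := h
  have hpart := part_set hi v
  have hle := isChain_ge_iff_antitone_part.1 hchain i.le_succ
  rw [hpart] at hle
  refine ⟨i, v, by simpa using hle, hv, ?_⟩
  rw [part_filter_ne_zero hchain, hpart]

theorem exists_ritMove_part_eq_update (hl : l.IsChain (· ≥ ·)) {i v : ℕ}
    (hv₁ : part l (i + 1) ≤ v) (hv₂ : v < part l i) :
    ∃ l', RitMove l l' ∧ part l' = Function.update (part l) i v := by
  have hi : i < l.length := by
    by_contra h
    simp [part_eq_zero (not_lt.1 h)] at hv₂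
  have hanti := isChain_ge_iff_antitone_part.1 hl
  have hchain : (l.set i v).IsChain (· ≥ ·) := by
    rw [isChain_ge_iff_antitone_part, part_set hi]
    refine antitone_nat_of_succ_le fun n => ?_
    rcases lt_trichotomy (n + 1) i with hn | hn | hn
    · simpa [Function.update_apply, hn.ne, (Nat.lt_of_succ_lt hn).ne] using hanti n.le_succ
    · subst hn
      simpa using hv₂.le.trans (hanti n.le_succ)
    · rcases eq_or_ne n i with rfl | hn'
      · simpa using hv₁
      · simpa [Function.update_apply, hn.ne', hn'] using hanti n.le_succ
  exact ⟨_, ⟨i, v, hi, hv₂, hchain, rfl⟩, by rw [part_filter_ne_zero hchain, part_set hi]⟩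

end Partition

section Remnant

variable {l l' : List ℕ}

theorem finite_support_rem (l : List ℕ) : (rem l).support.Finite := by
  refine (Set.finite_Iio l.length).subset fun k hk => ?_
  rw [Set.mem_Iio]
  by_contra h
  exact hk (by simp [rem, part_eq_zero (show l.length ≤ 2 * k by omega)])

theorem rem_of_part_eq_update {i v : ℕ} (h : part l' = Function.update (part l) i v) {k : ℕ}
    (hk : k ≠ i / 2) : rem l' k = rem l k := by
  simp only [rem, h, Function.update_apply]
  rw [if_neg (by omega), if_neg (by omega)]

theorem RitMove.exists_rem_ne (hl : l.IsChain (· ≥ ·)) (h : RitMove l l') :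
    ∃ k, rem l' k ≠ rem l k ∧ ∀ j, j ≠ k → rem l' j = rem l j := by
  obtain ⟨i, v, hv₁, hv₂, hpart⟩ := h.exists_part_eq_update
  refine ⟨i / 2, ?_, fun j hj => rem_of_part_eq_update hpart hj⟩
  simp only [rem, hpart, Function.update_apply]
  rcases Nat.even_or_odd' i with ⟨k, rfl | rfl⟩
  · have hk : 2 * k / 2 = k := by omega
    simp only [hk, ↓reduceIte, if_neg (show 2 * k + 1 ≠ 2 * k by omega)]
    omega
  · have hk : (2 * k + 1) / 2 = k := by omega
    have := isChain_ge_iff_antitone_part.1 hl (show 2 * k ≤ 2 * k + 1 by omega)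
    simp only [hk, ↓reduceIte, if_neg (show 2 * k ≠ 2 * k + 1 by omega)]
    omega

theorem exists_ritMove_rem_eq_of_nimMove (hl : l.IsChain (· ≥ ·)) {q : ℕ → ℕ}
    (h : NimMove (rem l) q) : ∃ l', RitMove l l' ∧ rem l' = q := by
  obtain ⟨k, hk, hq⟩ := h
  have hk' : part l (2 * k + 1) + q k < part l (2 * k) := by simp only [rem] at hk; omega
  obtain ⟨l', hmove, hpart⟩ := exists_ritMove_part_eq_update hl le_self_add hk'
  refine ⟨l', hmove, funext fun j => ?_⟩
  rcases eq_or_ne j k with rfl | hj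
  · simp [rem, hpart]
  · rw [rem_of_part_eq_update hpart (by omega), hq j hj]

theorem exists_ritMove_rem_eq_single (hl : IsPartition l) (hne : l ≠ []) (h0 : rem l = 0) :
    ∃ l' k, RitMove l l' ∧ rem l' = Pi.single k 1 := by
  have hlen : 0 < l.length := List.length_pos_iff.2 hne
  have hlast : 0 < part l (l.length - 1) := by
    rw [part_eq_getElem (by omega)]
    exact hl.2 _ (List.getElem_mem _)
  have hend : part l (l.length - 1 + 1) = 0 := part_eq_zero (by omega)
  obtain ⟨k, hk⟩ : ∃ k, l.length - 1 = 2 * k + 1 := by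
    rcases Nat.even_or_odd' (l.length - 1) with ⟨k, hk | hk⟩
    · have := congrFun h0 k
      simp only [rem, ← hk, hend, Pi.zero_apply] at this
      omega
    · exact ⟨k, hk⟩
  rw [hk] at hlast hend
  obtain ⟨l', hmove, hpart⟩ := exists_ritMove_part_eq_update hl.1
    (i := 2 * k + 1) (v := part l (2 * k + 1) - 1) (by omega) (by omega)
  refine ⟨l', k, hmove, funext fun j => ?_⟩
  rcases eq_or_ne j k with rfl | hj
  · have hanti := isChain_ge_iff_antitone_part.1 hl.1 (show 2 * j ≤ 2 * j + 1 by omega)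
    have := congrFun h0 j
    simp only [rem, Pi.zero_apply] at this
    simp only [rem, hpart, ne_eq, Nat.left_eq_add, one_ne_zero, not_false_eq_true,
      Function.update_of_ne, Function.update_self, Pi.single_eq_same]
    omega
  · rw [rem_of_part_eq_update hpart (by omega), h0]
    simp [hj]

end Remnant

section Misere

variable {Gn : (ℕ → ℕ) → ℕ} {l l' : List ℕ}

theorem IsNimMisereGrundy.rem_ne_of_ritMove (hGn : IsNimMisereGrundy Gn)
    (hl : l.IsChain (· ≥ ·)) (h : RitMove l l') : Gn (rem l') ≠ Gn (rem l) := by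
  obtain ⟨k, hk, hrem⟩ := h.exists_rem_ne hl
  exact hGn.ne_of_eq_update (finite_support_rem l) (finite_support_rem l') hk hrem

theorem IsNimMisereGrundy.exists_ritMove_of_lt (hGn : IsNimMisereGrundy Gn)
    (hl : IsPartition l) (hne : l ≠ []) {m : ℕ} (hm : m < Gn (rem l)) :
    ∃ l', RitMove l l' ∧ Gn (rem l') = m := by
  by_cases h0 : rem l = 0
  · rw [h0, hGn.1 0 fun _ => rfl, Nat.lt_one_iff] at hm
    obtain ⟨l', k, hmove, hrem⟩ := exists_ritMove_rem_eq_single hl hne h0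
    exact ⟨l', hmove, by rw [hrem, hGn.apply_single_one, hm]⟩
  · obtain ⟨q, hq, rfl⟩ := hGn.exists_nimMove_of_lt (finite_support_rem l) h0 hm
    obtain ⟨l', hmove, rfl⟩ := exists_ritMove_rem_eq_of_nimMove hl.1 hq
    exact ⟨l', hmove, rfl⟩

end Misere

/-- the misère Grundy value of `λ` under RIT equals the misère Grundy
value of the Nim position `rem λ`. -/
theorem stmt_8 (Gr : List ℕ → ℕ) (Gn : (ℕ → ℕ) → ℕ)
    (hGr : IsRitMisereGrundy Gr) (hGn : IsNimMisereGrundy Gn)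
    (l : List ℕ) (hl : IsPartition l) : Gr l = Gn (rem l) := by
  induction hs : l.sum using Nat.strong_induction_on generalizing l with
  | _ n ih =>
    rcases eq_or_ne l [] with rfl | hne
    · rw [hGr.1, hGn.1 (rem []) fun k => rfl]
    have hoptions : {n | ∃ l', RitMove l l' ∧ Gr l' = n}
        = {n | ∃ l', RitMove l l' ∧ Gn (rem l') = n} := by
      ext m
      refine exists_congr fun l' => and_congr_right fun h => ?_
      rw [ih _ (hs ▸ h.sum_lt) l' h.isPartition rfl]
    rw [hGr.2 l hl hne, hoptions]
    exact mexOf_eq (fun ⟨l', h, he⟩ => hGn.rem_ne_of_ritMove hl.1 h he)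
      fun m hm => hGn.exists_ritMove_of_lt hl hne hm
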